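/- arXiv:1402.3995 — 3 statements merged into one kernel-verified Lean document; each statement's English description precedes it below -/
import Mathlib

section
/- Let φ̂ : ℝ² → ℂ be bounded and Lipschitz continuous. Then for k → 0+, k² ∫_{ℝ²} |φ̂(p)|²/(|p|²+k²)² dp = π|φ̂(0)|² + O(√k). -/
/-!
For `k > 0` the kernel `k² / (‖p‖² + k²)²` has total mass `π` on the plane, so the difference
to be estimated is `∫ (‖φ̂ p‖² - ‖φ̂ 0‖²) k² / (‖p‖² + k²)² dp`. Since `φ̂` is bounded by `C` and
`L`-Lipschitz, `‖φ̂‖²` is `2CL`-Lipschitz at the origin, and the first moment of the kernel is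
`π² k / 2`; the difference is therefore `O(k)`, hence `O(√k)`. Both integrals reduce in polar
coordinates to integrals over `(0, ∞)` with elementary primitives.
-/

open MeasureTheory Asymptotics

open Set Filter Real Topology

noncomputable def sqLorentzian (k y : ℝ) : ℝ := k ^ 2 / (y ^ 2 + k ^ 2) ^ 2

theorem sqLorentzian_nonneg (k y : ℝ) : 0 ≤ sqLorentzian k y := by
  unfold sqLorentzian; positivity

theorem tendsto_neg_sq_div_two_mul_sq_add_sq_atTop (k : ℝ) :
    Tendsto (fun y : ℝ => -k ^ 2 / (2 * (y ^ 2 + k ^ 2))) atTop (𝓝 0) :=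
  tendsto_const_nhds.div_atTop <| (tendsto_atTop_add_const_right _ _
    (tendsto_pow_atTop two_ne_zero)).const_mul_atTop two_pos

section Radial

variable {k : ℝ}

theorem hasDerivAt_neg_sq_div_two_mul_sq_add_sq (hk : k ≠ 0) (y : ℝ) :
    HasDerivAt (fun y => -k ^ 2 / (2 * (y ^ 2 + k ^ 2))) (y * sqLorentzian k y) y := by
  have hden : HasDerivAt (fun y : ℝ => 2 * (y ^ 2 + k ^ 2)) (2 * (2 * y)) y := by
    simpa using ((hasDerivAt_pow 2 y).add_const (k ^ 2)).const_mul 2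
  refine ((hasDerivAt_const y (-k ^ 2)).div hden (by positivity)).congr_deriv ?_
  unfold sqLorentzian
  field_simp
  ring

theorem hasDerivAt_arctan_sub_div_sq_add_sq (hk : k ≠ 0) (y : ℝ) :
    HasDerivAt (fun y => k / 2 * (arctan (y / k) - k * y / (y ^ 2 + k ^ 2)))
      (y ^ 2 * sqLorentzian k y) y := by
  have hatan := (hasDerivAt_arctan (y / k)).comp y ((hasDerivAt_id y).div_const k)
  have hden : HasDerivAt (fun y : ℝ => y ^ 2 + k ^ 2) (2 * y) y := by
    simpa using (hasDerivAt_pow 2 y).add_const (k ^ 2)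
  have hfrac := ((hasDerivAt_id y).const_mul k).div hden (by positivity)
  refine ((hatan.sub hfrac).const_mul (k / 2)).congr_deriv ?_
  simp only [id, sqLorentzian]
  field_simp
  ring

theorem tendsto_arctan_sub_div_sq_add_sq_atTop (hk : 0 < k) :
    Tendsto (fun y => k / 2 * (arctan (y / k) - k * y / (y ^ 2 + k ^ 2))) atTop
      (𝓝 (k / 2 * (π / 2))) := by
  have hatan : Tendsto (fun y => arctan (y / k)) atTop (𝓝 (π / 2)) :=
    (tendsto_arctan_atTop.mono_right nhdsWithin_le_nhds).comp
      (tendsto_id.atTop_div_const hk)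
  have hfrac : Tendsto (fun y => k * y / (y ^ 2 + k ^ 2)) atTop (𝓝 0) := by
    have hinv : Tendsto (fun y : ℝ => k * y⁻¹) atTop (𝓝 0) := by
      simpa using tendsto_inv_atTop_zero.const_mul k
    refine tendsto_of_tendsto_of_tendsto_of_le_of_le' tendsto_const_nhds hinv ?_ ?_
    all_goals filter_upwards [eventually_gt_atTop 0] with y hy
    · positivity
    · rw [div_le_iff₀ (by positivity)]
      field_simp
      nlinarith [sq_nonneg k]
  simpa using (hatan.sub hfrac).const_mul (k / 2)

theorem integrableOn_Ioi_mul_sqLorentzian (hk : 0 < k) :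
    IntegrableOn (fun y => y * sqLorentzian k y) (Ioi 0) :=
  integrableOn_Ioi_deriv_of_nonneg' (fun y _ => hasDerivAt_neg_sq_div_two_mul_sq_add_sq hk.ne' y)
    (fun y hy => mul_nonneg (le_of_lt hy) (sqLorentzian_nonneg k y))
    (tendsto_neg_sq_div_two_mul_sq_add_sq_atTop k)

theorem integral_Ioi_mul_sqLorentzian (hk : 0 < k) :
    ∫ y in Ioi 0, y * sqLorentzian k y = 1 / 2 := by
  rw [integral_Ioi_of_hasDerivAt_of_nonneg'
    (fun y _ => hasDerivAt_neg_sq_div_two_mul_sq_add_sq hk.ne' y)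
    (fun y hy => mul_nonneg (le_of_lt hy) (sqLorentzian_nonneg k y))
    (tendsto_neg_sq_div_two_mul_sq_add_sq_atTop k)]
  field_simp
  ring

theorem integrableOn_Ioi_sq_mul_sqLorentzian (hk : 0 < k) :
    IntegrableOn (fun y => y ^ 2 * sqLorentzian k y) (Ioi 0) :=
  integrableOn_Ioi_deriv_of_nonneg' (fun y _ => hasDerivAt_arctan_sub_div_sq_add_sq hk.ne' y)
    (fun y _ => mul_nonneg (sq_nonneg y) (sqLorentzian_nonneg k y))
    (tendsto_arctan_sub_div_sq_add_sq_atTop hk)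

theorem integral_Ioi_sq_mul_sqLorentzian (hk : 0 < k) :
    ∫ y in Ioi 0, y ^ 2 * sqLorentzian k y = π / 4 * k := by
  rw [integral_Ioi_of_hasDerivAt_of_nonneg'
    (fun y _ => hasDerivAt_arctan_sub_div_sq_add_sq hk.ne' y)
    (fun y _ => mul_nonneg (sq_nonneg y) (sqLorentzian_nonneg k y))
    (tendsto_arctan_sub_div_sq_add_sq_atTop hk)]
  simp only [zero_div, arctan_zero, mul_zero, sub_self, sub_zero]
  ring

end Radial

section Plane

variable {F : Type*} [NormedAddCommGroup F] [NormedSpace ℝ F]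

theorem EuclideanSpace.integral_fun_norm_fin_two (f : ℝ → F) :
    ∫ p : EuclideanSpace ℝ (Fin 2), f ‖p‖ = (2 * π) • ∫ y in Ioi 0, y • f y := by
  rw [integral_fun_norm_addHaar volume f]
  simp [measureReal_def, pi_nonneg, mul_smul, two_smul]

theorem EuclideanSpace.integrable_fun_norm_fin_two {f : ℝ → F} :
    Integrable (fun p : EuclideanSpace ℝ (Fin 2) => f ‖p‖) ↔
      IntegrableOn (fun y => y • f y) (Ioi 0) := by
  rw [integrable_fun_norm_addHaar volume]
  simp

end Plane

section Kernel

local notation "ℝ²" => EuclideanSpace ℝ (Fin 2)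

variable {k : ℝ}

theorem integrable_sqLorentzian_norm (hk : 0 < k) :
    Integrable fun p : ℝ² => sqLorentzian k ‖p‖ :=
  EuclideanSpace.integrable_fun_norm_fin_two.2 (integrableOn_Ioi_mul_sqLorentzian hk)

theorem integral_sqLorentzian_norm (hk : 0 < k) :
    ∫ p : ℝ², sqLorentzian k ‖p‖ = π := by
  simp only [EuclideanSpace.integral_fun_norm_fin_two, smul_eq_mul,
    integral_Ioi_mul_sqLorentzian hk]
  ring

theorem integrable_norm_mul_sqLorentzian_norm (hk : 0 < k) :
    Integrable fun p : ℝ² => ‖p‖ * sqLorentzian k ‖p‖ :=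
  (EuclideanSpace.integrable_fun_norm_fin_two (f := fun y => y * sqLorentzian k y)).2 <| by
    simpa only [smul_eq_mul, ← mul_assoc, ← sq] using integrableOn_Ioi_sq_mul_sqLorentzian hk

theorem integral_norm_mul_sqLorentzian_norm (hk : 0 < k) :
    ∫ p : ℝ², ‖p‖ * sqLorentzian k ‖p‖ = π ^ 2 / 2 * k := by
  simp only [EuclideanSpace.integral_fun_norm_fin_two (fun y => y * sqLorentzian k y),
    smul_eq_mul, ← mul_assoc, ← sq, integral_Ioi_sq_mul_sqLorentzian hk]
  ring

theorem abs_integral_mul_sqLorentzian_norm_sub_le {f : ℝ² → ℝ} (hf : AEStronglyMeasurable f)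
    {M : ℝ} (hM : ∀ p, |f p - f 0| ≤ M * ‖p‖) (hk : 0 < k) :
    |(∫ p, f p * sqLorentzian k ‖p‖) - π * f 0| ≤ M * (π ^ 2 / 2) * k := by
  have hg := integrable_sqLorentzian_norm hk
  have hdiff_le : ∀ p, ‖(f p - f 0) * sqLorentzian k ‖p‖‖ ≤ M * (‖p‖ * sqLorentzian k ‖p‖) :=
    fun p => by
      rw [norm_mul, Real.norm_of_nonneg (sqLorentzian_nonneg _ _), ← mul_assoc]
      exact mul_le_mul_of_nonneg_right (hM p) (sqLorentzian_nonneg _ _)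
  have hmajorant := (integrable_norm_mul_sqLorentzian_norm hk).const_mul M
  have hdiff : Integrable fun p => (f p - f 0) * sqLorentzian k ‖p‖ :=
    hmajorant.mono' ((hf.sub aestronglyMeasurable_const).mul hg.aestronglyMeasurable)
      (.of_forall hdiff_le)
  have hfg : Integrable fun p => f p * sqLorentzian k ‖p‖ :=
    (hdiff.add (hg.const_mul (f 0))).congr (.of_forall fun p => by simp only [Pi.add_apply]; ring)
  calc |(∫ p, f p * sqLorentzian k ‖p‖) - π * f 0|
      = ‖∫ p, (f p - f 0) * sqLorentzian k ‖p‖‖ := by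
        simp only [sub_mul, integral_sub hfg (hg.const_mul (f 0)), integral_const_mul,
          integral_sqLorentzian_norm hk, Real.norm_eq_abs, mul_comm π]
    _ ≤ ∫ p, M * (‖p‖ * sqLorentzian k ‖p‖) :=
        norm_integral_le_of_norm_le hmajorant (.of_forall hdiff_le)
    _ = M * (π ^ 2 / 2) * k := by
        rw [integral_const_mul, integral_norm_mul_sqLorentzian_norm hk, mul_assoc]

end Kernel

theorem abs_norm_sq_sub_norm_sq_le {E : Type*} [SeminormedAddCommGroup E] {x y : E} {C : ℝ}
    (hx : ‖x‖ ≤ C) (hy : ‖y‖ ≤ C) : |‖x‖ ^ 2 - ‖y‖ ^ 2| ≤ 2 * C * ‖x - y‖ := by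
  rw [sq_sub_sq, abs_mul, abs_of_nonneg (by positivity)]
  have := abs_norm_sub_norm_le x y
  nlinarith [norm_nonneg x, norm_nonneg y, abs_nonneg (‖x‖ - ‖y‖)]

theorem isBigO_id_sqrt_nhdsGT_zero : (fun k : ℝ => k) =O[𝓝[>] 0] fun k => √k :=
  isBigO_iff.2 ⟨1, by
    filter_upwards [Ioo_mem_nhdsGT zero_lt_one] with k hk
    simp only [Real.norm_eq_abs, abs_of_pos hk.1, abs_of_nonneg (sqrt_nonneg k), one_mul]
    exact le_sqrt_self_iff.2 hk.2.le⟩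

theorem stmt7 (φhat : EuclideanSpace ℝ (Fin 2) → ℂ)
    (hbdd : ∃ C : ℝ, ∀ p, ‖φhat p‖ ≤ C)
    (hlip : ∃ L : NNReal, LipschitzWith L φhat) :
    (fun k : ℝ =>
        k ^ 2 * (∫ p, ‖φhat p‖ ^ 2 / (‖p‖ ^ 2 + k ^ 2) ^ 2) -
          Real.pi * ‖φhat 0‖ ^ 2)
      =O[nhdsWithin 0 (Set.Ioi 0)] fun k => Real.sqrt k := by
  obtain ⟨C, hC⟩ := hbdd
  obtain ⟨L, hL⟩ := hlip
  have hC0 : 0 ≤ C := (norm_nonneg _).trans (hC 0)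
  have hsq_lip : ∀ p, |‖φhat p‖ ^ 2 - ‖φhat 0‖ ^ 2| ≤ 2 * C * L * ‖p‖ := fun p =>
    calc |‖φhat p‖ ^ 2 - ‖φhat 0‖ ^ 2| ≤ 2 * C * ‖φhat p - φhat 0‖ :=
          abs_norm_sq_sub_norm_sq_le (hC p) (hC 0)
      _ ≤ 2 * C * (L * ‖p - 0‖) := by gcongr; exact hL.norm_sub_le p 0
      _ = 2 * C * L * ‖p‖ := by rw [sub_zero]; ring
  have hmeas : AEStronglyMeasurable fun p => ‖φhat p‖ ^ 2 :=
    ((continuous_norm.comp hL.continuous).pow 2).aestronglyMeasurable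
  refine IsBigO.trans ?_ isBigO_id_sqrt_nhdsGT_zero
  refine isBigO_iff.2 ⟨2 * C * L * (π ^ 2 / 2), ?_⟩
  filter_upwards [self_mem_nhdsWithin] with k (hk : 0 < k)
  have hrewrite : k ^ 2 * ∫ p, ‖φhat p‖ ^ 2 / (‖p‖ ^ 2 + k ^ 2) ^ 2 =
      ∫ p, ‖φhat p‖ ^ 2 * sqLorentzian k ‖p‖ := by
    rw [← integral_const_mul]
    congr 1 with p
    rw [sqLorentzian]
    ring
  rw [hrewrite, Real.norm_eq_abs, Real.norm_of_nonneg hk.le]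
  exact abs_integral_mul_sqLorentzian_norm_sub_le hmeas hsq_lip hk
end

section
/- Let μ be a compactly supported finite positive measure on ℝ² satisfying the Kato condition: lim_{ε→0+} sup_{x∈ℝ²} ∫_{D_ε(x)} |ln|x-y|| dμ(y) = 0. Then for any constant C ∈ ℝ, the integral operator (Rf)(x) = ∫_{ℝ²} (-ln|x-y| + C) f(y) dμ(y) is bounded on L²(μ). -/
/-!
Schur test. The kernel `k(x, y) = -log |x - y| + C` is symmetric, so it suffices to bound its
row integrals `∫ |k(x, y)| dμ(y)` uniformly for `x` in the compact set `K` carrying `μ`. On a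
small disc `D_ε(x)` the Kato condition bounds the logarithmic part; off it, `ε ≤ |x - y| ≤ diam K`
for `μ`-a.e. `y`, where `|log|` is bounded. Cauchy–Schwarz with weight `|k(x, ·)|` and Tonelli then
give `‖Rf‖₂² ≤ A · B · ‖f‖₂²` for row and column bounds `A`, `B`.
-/

open MeasureTheory ENNReal Metric Set

lemma sq_lintegral_mul_le_lintegral_mul_lintegral_mul_sq {α : Type*} [MeasurableSpace α]
    {μ : Measure α} {f g : α → ℝ≥0∞} (hf : AEMeasurable f μ) (hg : AEMeasurable g μ) :
    (∫⁻ a, f a * g a ∂μ) ^ 2 ≤ (∫⁻ a, f a ∂μ) * ∫⁻ a, f a * g a ^ 2 ∂μ := by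
  have hsq : ∀ x : ℝ≥0∞, (x ^ (1 / 2 : ℝ)) ^ 2 = x := fun x => by
    rw [← ENNReal.rpow_two, ← ENNReal.rpow_mul]; norm_num
  -- Hölder with exponents `(2, 2)` applied to `√f` and `√f * g`.
  have hsqrt : AEMeasurable (fun a => f a ^ (1 / 2 : ℝ)) μ := hf.pow_const _
  have hcs := ENNReal.lintegral_mul_le_Lp_mul_Lq μ Real.HolderConjugate.two_two hsqrt
    (hsqrt.mul hg)
  simp only [Pi.mul_apply, ← mul_assoc, ← ENNReal.rpow_add_of_nonneg _ _
    (by norm_num : (0:ℝ) ≤ 1 / 2) (by norm_num : (0:ℝ) ≤ 1 / 2), ENNReal.rpow_two, mul_pow,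
    hsq] at hcs
  norm_num at hcs
  calc (∫⁻ a, f a * g a ∂μ) ^ 2
      ≤ ((∫⁻ a, f a ∂μ) ^ (1 / 2 : ℝ) * (∫⁻ a, f a * g a ^ 2 ∂μ) ^ (1 / 2 : ℝ)) ^ 2 := by
        gcongr
    _ = (∫⁻ a, f a ∂μ) * ∫⁻ a, f a * g a ^ 2 ∂μ := by rw [mul_pow, hsq, hsq]

lemma eLpNorm_two_sq {α E : Type*} [MeasurableSpace α] [NormedAddCommGroup E]
    {μ : Measure α} (f : α → E) : eLpNorm f 2 μ ^ 2 = ∫⁻ a, ‖f a‖ₑ ^ 2 ∂μ := by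
  simpa using eLpNorm_nnreal_pow_eq_lintegral (f := f) (μ := μ) (p := 2) two_ne_zero

section Schur

variable {α β 𝕜 : Type*} [MeasurableSpace α] [MeasurableSpace β] [RCLike 𝕜]
  {μ : Measure α} {ν : Measure β}

lemma sq_enorm_integral_mul_le {g f : β → 𝕜} (hg : AEMeasurable (fun y => ‖g y‖ₑ) ν)
    (hf : AEMeasurable f ν) :
    ‖∫ y, g y * f y ∂ν‖ₑ ^ 2 ≤ (∫⁻ y, ‖g y‖ₑ ∂ν) * ∫⁻ y, ‖g y‖ₑ * ‖f y‖ₑ ^ 2 ∂ν :=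
  calc ‖∫ y, g y * f y ∂ν‖ₑ ^ 2 ≤ (∫⁻ y, ‖g y‖ₑ * ‖f y‖ₑ ∂ν) ^ 2 := by
        gcongr
        simpa only [enorm_mul] using enorm_integral_le_lintegral_enorm (fun y => g y * f y)
    _ ≤ _ := sq_lintegral_mul_le_lintegral_mul_lintegral_mul_sq hg hf.enorm

variable [SFinite μ] [SFinite ν] {k : α → β → 𝕜} {f : β → 𝕜} {A B : ℝ≥0∞}

theorem eLpNorm_integral_mul_sq_le
    (hk : AEStronglyMeasurable (Function.uncurry k) (μ.prod ν))
    (hf : AEMeasurable f ν) (hA : ∀ᵐ x ∂μ, ∫⁻ y, ‖k x y‖ₑ ∂ν ≤ A)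
    (hB : ∀ᵐ y ∂ν, ∫⁻ x, ‖k x y‖ₑ ∂μ ≤ B) :
    eLpNorm (fun x => ∫ y, k x y * f y ∂ν) 2 μ ^ 2 ≤ A * B * eLpNorm f 2 ν ^ 2 := by
  rw [eLpNorm_two_sq, eLpNorm_two_sq]
  have hkf : AEMeasurable (fun p : α × β => ‖k p.1 p.2‖ₑ * ‖f p.2‖ₑ ^ 2) (μ.prod ν) :=
    hk.enorm.mul (hf.enorm.pow_const 2).comp_snd
  calc ∫⁻ x, ‖∫ y, k x y * f y ∂ν‖ₑ ^ 2 ∂μ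
      ≤ ∫⁻ x, A * ∫⁻ y, ‖k x y‖ₑ * ‖f y‖ₑ ^ 2 ∂ν ∂μ := by
        refine lintegral_mono_ae ?_
        filter_upwards [hA, hk.prodMk_left] with x hxA hkx
        exact (sq_enorm_integral_mul_le (g := k x) hkx.enorm hf).trans (by gcongr)
    _ = A * ∫⁻ y, (∫⁻ x, ‖k x y‖ₑ ∂μ) * ‖f y‖ₑ ^ 2 ∂ν := by
        rw [lintegral_const_mul'' _ hkf.lintegral_prod_right', lintegral_lintegral_swap hkf]
        simp_rw [lintegral_mul_const' _ _ (pow_ne_top enorm_ne_top)]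
    _ ≤ A * (B * ∫⁻ y, ‖f y‖ₑ ^ 2 ∂ν) := by
        rw [← lintegral_const_mul'' _ (hf.enorm.pow_const 2)]
        gcongr A * ?_
        exact lintegral_mono_ae (hB.mono fun y hy => by gcongr)
    _ = A * B * ∫⁻ y, ‖f y‖ₑ ^ 2 ∂ν := (mul_assoc _ _ _).symm

theorem memLp_two_integral_mul (hk : AEStronglyMeasurable (Function.uncurry k) (μ.prod ν))
    (hf : MemLp f 2 ν) (hA : ∀ᵐ x ∂μ, ∫⁻ y, ‖k x y‖ₑ ∂ν ≤ A)
    (hB : ∀ᵐ y ∂ν, ∫⁻ x, ‖k x y‖ₑ ∂μ ≤ B) (hA_top : A ≠ ⊤) (hB_top : B ≠ ⊤) :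
    MemLp (fun x => ∫ y, k x y * f y ∂ν) 2 μ := by
  have hsq_lt_top : eLpNorm (fun x => ∫ y, k x y * f y ∂ν) 2 μ ^ 2 < ⊤ :=
    (eLpNorm_integral_mul_sq_le hk hf.aemeasurable hA hB).trans_lt
      (by have := hf.eLpNorm_ne_top; finiteness)
  exact ⟨(hk.mul hf.aestronglyMeasurable.comp_snd).integral_prod_right',
    by simpa using hsq_lt_top⟩

end Schur

lemma abs_log_le_max_of_le_of_le {ε t R : ℝ} (hε : 0 < ε) (hεt : ε ≤ t) (htR : t ≤ R) :
    |Real.log t| ≤ max |Real.log ε| |Real.log R| :=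
  abs_le_max_abs_abs (Real.log_le_log hε hεt) (Real.log_le_log (hε.trans_le hεt) htR)

section LogKernel

variable {X : Type*} [PseudoMetricSpace X] [MeasurableSpace X] [OpensMeasurableSpace X]
  {μ : Measure X} {x : X} {ε R : ℝ}

lemma lintegral_abs_log_dist_le (hε : 0 < ε) (hR : ∀ᵐ y ∂μ, dist x y ≤ R) :
    ∫⁻ y, ENNReal.ofReal |Real.log (dist x y)| ∂μ ≤
      ∫⁻ y in ball x ε, ENNReal.ofReal |Real.log (dist x y)| ∂μ +
        ENNReal.ofReal (max |Real.log ε| |Real.log R|) * μ univ := by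
  rw [← lintegral_add_compl _ measurableSet_ball]
  gcongr
  calc ∫⁻ y in (ball x ε)ᶜ, ENNReal.ofReal |Real.log (dist x y)| ∂μ
      ≤ ∫⁻ _ in (ball x ε)ᶜ, ENNReal.ofReal (max |Real.log ε| |Real.log R|) ∂μ := by
        refine setLIntegral_mono_ae aemeasurable_const ?_
        filter_upwards [hR] with y hy hyε
        rw [mem_compl_iff, mem_ball, not_lt, dist_comm] at hyε
        exact ofReal_le_ofReal (abs_log_le_max_of_le_of_le hε hyε hy)
    _ ≤ ENNReal.ofReal (max |Real.log ε| |Real.log R|) * μ univ := by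
        rw [setLIntegral_const]
        gcongr
        exact subset_univ _

lemma lintegral_enorm_neg_log_dist_add_le (C : ℝ) (hε : 0 < ε) (hR : ∀ᵐ y ∂μ, dist x y ≤ R) :
    ∫⁻ y, ‖((-Real.log (dist x y) + C : ℝ) : ℂ)‖ₑ ∂μ ≤
      ∫⁻ y in ball x ε, ENNReal.ofReal |Real.log (dist x y)| ∂μ +
        ENNReal.ofReal (max |Real.log ε| |Real.log R|) * μ univ +
          ENNReal.ofReal |C| * μ univ := by
  have hpt : ∀ y, ‖((-Real.log (dist x y) + C : ℝ) : ℂ)‖ₑ ≤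
      ENNReal.ofReal |Real.log (dist x y)| + ENNReal.ofReal |C| := fun y => by
    rw [← ofReal_norm, Complex.norm_real, Real.norm_eq_abs, ← ofReal_add (abs_nonneg _)
      (abs_nonneg _), ← abs_neg (Real.log _)]
    exact ofReal_le_ofReal (abs_add_le _ _)
  calc ∫⁻ y, ‖((-Real.log (dist x y) + C : ℝ) : ℂ)‖ₑ ∂μ
      ≤ ∫⁻ y, ENNReal.ofReal |Real.log (dist x y)| ∂μ + ENNReal.ofReal |C| * μ univ := by
        rw [← lintegral_const, ← lintegral_add_right _ measurable_const]
        exact lintegral_mono hpt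
    _ ≤ _ := by gcongr; exact lintegral_abs_log_dist_le hε hR

end LogKernel

theorem stmt8 (μ : Measure (EuclideanSpace ℝ (Fin 2))) [IsFiniteMeasure μ]
    (K : Set (EuclideanSpace ℝ (Fin 2))) (hK : IsCompact K) (hμK : μ Kᶜ = 0)
    (hKato : Filter.Tendsto
      (fun ε : ℝ => ⨆ x : EuclideanSpace ℝ (Fin 2),
        ∫⁻ y in Metric.ball x ε, ENNReal.ofReal |Real.log (dist x y)| ∂μ)
      (nhdsWithin 0 (Set.Ioi 0)) (nhds 0))
    (C : ℝ) :
    ∃ M : ENNReal, M ≠ ⊤ ∧ ∀ f : EuclideanSpace ℝ (Fin 2) → ℂ, MemLp f 2 μ →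
      MemLp (fun x => ∫ y, ((-Real.log (dist x y) + C : ℝ) : ℂ) * f y ∂μ) 2 μ ∧
      eLpNorm (fun x => ∫ y, ((-Real.log (dist x y) + C : ℝ) : ℂ) * f y ∂μ) 2 μ ≤
        M * eLpNorm f 2 μ := by
  obtain ⟨ε, hε, hKato_ε⟩ :=
    (eventually_mem_nhdsWithin.and (hKato.eventually_lt_const one_pos)).exists
  obtain ⟨R, hR⟩ := isBounded_iff.1 hK.isBounded
  have hK_ae : ∀ᵐ y ∂μ, y ∈ K := mem_ae_iff.2 hμK
  set A := (⨆ z, ∫⁻ y in ball z ε, ENNReal.ofReal |Real.log (dist z y)| ∂μ) +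
    ENNReal.ofReal (max |Real.log ε| |Real.log R|) * μ univ + ENNReal.ofReal |C| * μ univ
    with hA_def
  have hA : A ≠ ⊤ := by have := hKato_ε.ne_top; finiteness
  have hrow : ∀ᵐ x ∂μ, ∫⁻ y, ‖((-Real.log (dist x y) + C : ℝ) : ℂ)‖ₑ ∂μ ≤ A := by
    filter_upwards [hK_ae] with x hx
    refine (lintegral_enorm_neg_log_dist_add_le C hε
      (hK_ae.mono fun y hy => hR hx hy)).trans ?_
    rw [hA_def]
    gcongr
    exact le_iSup (fun z => ∫⁻ y in ball z ε, ENNReal.ofReal |Real.log (dist z y)| ∂μ) x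
  have hcol : ∀ᵐ y ∂μ, ∫⁻ x, ‖((-Real.log (dist x y) + C : ℝ) : ℂ)‖ₑ ∂μ ≤ A :=
    hrow.mono fun y hy => by simpa only [dist_comm y] using hy
  have hk : AEStronglyMeasurable
      (Function.uncurry fun x y => ((-Real.log (dist x y) + C : ℝ) : ℂ)) (μ.prod μ) :=
    (by fun_prop : Measurable _).aestronglyMeasurable
  refine ⟨A, hA, fun f hf => ⟨memLp_two_integral_mul hk hf hrow hcol hA hA, ?_⟩⟩
  have hle := eLpNorm_integral_mul_sq_le hk hf.aemeasurable hrow hcol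
  rwa [← sq, ← mul_pow, ENNReal.pow_le_pow_left_iff two_ne_zero] at hle
end

section
/- Let T(k) = T₀ + (1/ln k) T₁ + E(k), where T₀ = (·,φ)φ with ‖φ‖=1, T₁ is a bounded self-adjoint operator, and ‖E(k)‖ = O(1/ln²k) as k → 0+. If for small k > 0 the operator T(k) has an eigenvalue ω(k) with normalized eigenvector φ_k satisfying ‖φ_k - φ‖ = O(1/ln k), then ω(k) = 1 + (1/ln k)(T₁φ,φ) + O(1/ln²k) as k → 0+. -/
/-!
For a unit eigenvector `x = φₖ` the eigenvalue is the Rayleigh quotient `ω = Re ⟪x, T x⟫`.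
Splitting `T = T₀ + s T₁ + E` with `s = 1 / log k`, the three pieces contribute
`|⟪φ, x⟫|² = 1 + O(‖x - φ‖²)`, `s ⟪x, T₁ x⟫ = s ⟪φ, T₁ φ⟫ + O(|s| ‖x - φ‖)` and `O(‖E‖)`,
and each error term is `O(1 / log² k)`.
-/

open Asymptotics Filter ContinuousLinearMap
open scoped InnerProductSpace

section RCLike

variable {𝕜 E : Type*} [RCLike 𝕜] [NormedAddCommGroup E] [InnerProductSpace 𝕜 E]

lemma abs_norm_inner_sq_sub_one_le {φ x : E} (hφ : ‖φ‖ = 1) (hx : ‖x‖ = 1) :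
    |‖⟪φ, x⟫_𝕜‖ ^ 2 - 1| ≤ ‖x - φ‖ ^ 2 := by
  have hcs : ‖⟪φ, x⟫_𝕜‖ ≤ 1 := by simpa [hφ, hx] using norm_inner_le_norm (𝕜 := 𝕜) φ x
  have hre : RCLike.re ⟪φ, x⟫_𝕜 ≤ ‖⟪φ, x⟫_𝕜‖ := RCLike.re_le_norm _
  have hdist : ‖x - φ‖ ^ 2 = 2 - 2 * RCLike.re ⟪φ, x⟫_𝕜 := by
    rw [norm_sub_sq (𝕜 := 𝕜), hx, hφ, inner_re_symm]; ring
  rw [abs_of_nonpos (by nlinarith [norm_nonneg ⟪φ, x⟫_𝕜])]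
  -- `|⟪φ, x⟫|² ≥ (1 - ‖x - φ‖² / 2)²` when the base is nonnegative; otherwise `‖x - φ‖² > 2`
  nlinarith [norm_nonneg ⟪φ, x⟫_𝕜]

lemma norm_inner_map_self_sub_le (A : E →L[𝕜] E) (x y : E) :
    ‖⟪x, A x⟫_𝕜 - ⟪y, A y⟫_𝕜‖ ≤ ‖A‖ * (‖x‖ + ‖y‖) * ‖x - y‖ := by
  have hsplit : ⟪x, A x⟫_𝕜 - ⟪y, A y⟫_𝕜 = ⟪x - y, A x⟫_𝕜 + ⟪y, A (x - y)⟫_𝕜 := by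
    simp only [inner_sub_left, map_sub, inner_sub_right]; ring
  calc ‖⟪x, A x⟫_𝕜 - ⟪y, A y⟫_𝕜‖
      ≤ ‖x - y‖ * ‖A x‖ + ‖y‖ * ‖A (x - y)‖ := by
        rw [hsplit]
        exact (norm_add_le _ _).trans (add_le_add (norm_inner_le_norm _ _) (norm_inner_le_norm _ _))
    _ ≤ ‖x - y‖ * (‖A‖ * ‖x‖) + ‖y‖ * (‖A‖ * ‖x - y‖) := by
        gcongr <;> exact A.le_opNorm _
    _ = ‖A‖ * (‖x‖ + ‖y‖) * ‖x - y‖ := by ring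

lemma norm_inner_map_self_le (A : E →L[𝕜] E) {x : E} (hx : ‖x‖ = 1) :
    ‖⟪x, A x⟫_𝕜‖ ≤ ‖A‖ :=
  calc ‖⟪x, A x⟫_𝕜‖ ≤ ‖x‖ * (‖A‖ * ‖x‖) :=
        (norm_inner_le_norm _ _).trans (by gcongr; exact A.le_opNorm x)
    _ = ‖A‖ := by rw [hx]; ring

lemma inner_map_self_eq_of_eigen {T : E →L[𝕜] E} {x : E} {ω : 𝕜} (hx : ‖x‖ = 1)
    (hT : T x = ω • x) : ⟪x, T x⟫_𝕜 = ω := by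
  rw [hT, inner_smul_right, inner_self_eq_norm_sq_to_K, hx]; simp

lemma re_inner_apply_self_of_rankOne {T₀ : E →L[𝕜] E} {φ x : E} (hT₀ : T₀ x = ⟪φ, x⟫_𝕜 • φ) :
    RCLike.re ⟪x, T₀ x⟫_𝕜 = ‖⟪φ, x⟫_𝕜‖ ^ 2 := by
  rw [hT₀, inner_smul_right, ← inner_conj_symm x φ, mul_comm, RCLike.conj_mul]
  norm_cast

end RCLike

section Complex

variable {H : Type*} [NormedAddCommGroup H] [InnerProductSpace ℂ H]

lemma eigenvalue_sub_eq {φ x : H} (hx : ‖x‖ = 1) {T₀ T₁ T : H →L[ℂ] H}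
    (hT₀ : T₀ x = ⟪φ, x⟫_ℂ • φ) {s ω : ℝ} (hT : T x = (ω : ℂ) • x) :
    ω - 1 - s * (⟪φ, T₁ φ⟫_ℂ).re =
      (⟪x, (T - (T₀ + s • T₁)) x⟫_ℂ).re + (‖⟪φ, x⟫_ℂ‖ ^ 2 - 1)
        + s * (⟪x, T₁ x⟫_ℂ - ⟪φ, T₁ φ⟫_ℂ).re := by
  have hω : (⟪x, T x⟫_ℂ).re = ω := by simp [inner_map_self_eq_of_eigen hx hT]
  have hT₀x : (⟪x, T₀ x⟫_ℂ).re = ‖⟪φ, x⟫_ℂ‖ ^ 2 := re_inner_apply_self_of_rankOne hT₀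
  simp only [sub_apply, add_apply, smul_apply, ← Complex.coe_smul,
    inner_sub_right, inner_add_right, inner_smul_right, Complex.sub_re, Complex.add_re,
    Complex.re_ofReal_mul, hω, hT₀x]
  ring

lemma abs_eigenvalue_sub_le {φ x : H} (hφ : ‖φ‖ = 1) (hx : ‖x‖ = 1) {T₀ T₁ T : H →L[ℂ] H}
    (hT₀ : T₀ x = ⟪φ, x⟫_ℂ • φ) {s ω : ℝ} (hT : T x = (ω : ℂ) • x) :
    |ω - 1 - s * (⟪φ, T₁ φ⟫_ℂ).re| ≤
      ‖T - (T₀ + s • T₁)‖ + ‖x - φ‖ ^ 2 + |s| * (2 * ‖T₁‖ * ‖x - φ‖) := by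
  have hErr := (Complex.abs_re_le_norm _).trans (norm_inner_map_self_le (T - (T₀ + s • T₁)) hx)
  have hT₁ : |(⟪x, T₁ x⟫_ℂ - ⟪φ, T₁ φ⟫_ℂ).re| ≤ 2 * ‖T₁‖ * ‖x - φ‖ := by
    refine (Complex.abs_re_le_norm _).trans ((norm_inner_map_self_sub_le T₁ x φ).trans_eq ?_)
    rw [hx, hφ]; ring
  rw [eigenvalue_sub_eq hx hT₀ hT]
  refine (abs_add_three _ _ _).trans ?_
  rw [abs_mul]
  gcongr
  exact abs_norm_inner_sq_sub_one_le hφ hx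

end Complex

theorem stmt11_general {H : Type*} [NormedAddCommGroup H] [InnerProductSpace ℂ H]
    (φ : H) (hφ : ‖φ‖ = 1)
    (T₀ T₁ : H →L[ℂ] H) (hT₀ : ∀ x, T₀ x = ⟪φ, x⟫_ℂ • φ)
    (T : ℝ → H →L[ℂ] H)
    (hE : (fun k : ℝ => ‖T k - (T₀ + (1 / Real.log k) • T₁)‖)
      =O[nhdsWithin 0 (Set.Ioi 0)] fun k => 1 / Real.log k ^ 2)
    (ω : ℝ → ℝ) (φk : ℝ → H)
    (heig : ∀ᶠ k in nhdsWithin 0 (Set.Ioi 0),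
      T k (φk k) = (ω k : ℂ) • φk k ∧ ‖φk k‖ = 1)
    (hφk : (fun k : ℝ => ‖φk k - φ‖)
      =O[nhdsWithin 0 (Set.Ioi 0)] fun k => 1 / Real.log k) :
    (fun k : ℝ => ω k - 1 - (1 / Real.log k) * (⟪φ, T₁ φ⟫_ℂ).re)
      =O[nhdsWithin 0 (Set.Ioi 0)] fun k => 1 / Real.log k ^ 2 := by
  have hsq : (fun k : ℝ => 1 / Real.log k ^ 2) = fun k => 1 / Real.log k * (1 / Real.log k) := by
    funext k; ring
  have hmajorant : (fun k : ℝ => ‖T k - (T₀ + (1 / Real.log k) • T₁)‖ + ‖φk k - φ‖ ^ 2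
      + |1 / Real.log k| * (2 * ‖T₁‖ * ‖φk k - φ‖))
      =O[nhdsWithin 0 (Set.Ioi 0)] fun k => 1 / Real.log k ^ 2 := by
    rw [hsq] at hE ⊢
    refine (hE.add ?_).add ((isBigO_refl _ _).norm_left.mul (hφk.const_mul_left _))
    simpa only [sq] using hφk.mul hφk
  refine (IsBigO.of_bound' ?_).trans hmajorant
  filter_upwards [heig] with k ⟨hT, hnorm⟩
  rw [Real.norm_eq_abs, Real.norm_of_nonneg (by positivity)]
  exact abs_eigenvalue_sub_le hφ hnorm (hT₀ _) hT

theorem stmt11 {H : Type*} [NormedAddCommGroup H] [InnerProductSpace ℂ H]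
    [CompleteSpace H] (φ : H) (hφ : ‖φ‖ = 1)
    (T₀ T₁ : H →L[ℂ] H) (hT₀ : ∀ x, T₀ x = ⟪φ, x⟫_ℂ • φ)
    (hT₁ : IsSelfAdjoint T₁)
    (T : ℝ → H →L[ℂ] H) (hTsa : ∀ k : ℝ, 0 < k → IsSelfAdjoint (T k))
    (hE : (fun k : ℝ => ‖T k - (T₀ + (1 / Real.log k) • T₁)‖)
      =O[nhdsWithin 0 (Set.Ioi 0)] fun k => 1 / Real.log k ^ 2)
    (ω : ℝ → ℝ) (φk : ℝ → H)
    (heig : ∀ᶠ k in nhdsWithin 0 (Set.Ioi 0),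
      T k (φk k) = (ω k : ℂ) • φk k ∧ ‖φk k‖ = 1)
    (hφk : (fun k : ℝ => ‖φk k - φ‖)
      =O[nhdsWithin 0 (Set.Ioi 0)] fun k => 1 / Real.log k) :
    (fun k : ℝ => ω k - 1 - (1 / Real.log k) * (⟪φ, T₁ φ⟫_ℂ).re)
      =O[nhdsWithin 0 (Set.Ioi 0)] fun k => 1 / Real.log k ^ 2 :=
  stmt11_general φ hφ T₀ T₁ hT₀ T hE ω φk heig hφk
end
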